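/- Let Σ be a finite alphabet and let Π be a conditional probability kernel from Σ^{2n} to a finite transcript alphabet such that for all inputs t, t' ∈ Σ^{2n} differing in exactly one coordinate and every transcript π, Pr[Π(t) = π] ≤ e^ε·Pr[Π(t') = π]. Then for every probability distribution P on the input T ∈ Σ^{2n}, the mutual information between the input and the transcript satisfies I(T; Π(T)) ≤ 2εn nats (hence at most 2(log₂e)·εn ≤ 3εn bits). -/
import Mathlib


open Real
open scoped BigOperators

/-- Two input strings are neighbors if they differ in exactly one coordinate. -/
def NeighborStr {m : ℕ} {A : Type*} (t t' : Fin m → A) : Prop :=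
  ∃ i, t i ≠ t' i ∧ ∀ j, j ≠ i → t j = t' j

/-- The mutual information `I(T; Π(T))` (in nats) between the input `T ∼ P` and the
transcript of the protocol, i.e. the information cost of the protocol. -/
noncomputable def infoCost {A 𝒯 : Type*} [Fintype A] [Fintype 𝒯]
    (P : A → ℝ) (K : A → 𝒯 → ℝ) : ℝ :=
  ∑ t, ∑ tr, P t * K t tr * log (K t tr / ∑ t', P t' * K t' tr)

lemma chain_bound {m : ℕ} {Sig 𝒯 : Type*} [Fintype Sig] [DecidableEq Sig]
    (K : (Fin m → Sig) → 𝒯 → ℝ) (ε : ℝ) (hε : 0 ≤ ε)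
    (hK0 : ∀ t tr, 0 ≤ K t tr)
    (hDP : ∀ t t', NeighborStr t t' → ∀ tr, K t tr ≤ exp ε * K t' tr) :
    ∀ (d : ℕ) (t t' : Fin m → Sig),
      (Finset.univ.filter fun i => t i ≠ t' i).card ≤ d →
      ∀ tr, K t tr ≤ exp (ε * d) * K t' tr := by
  intro d
  induction d with
  | zero =>
    intro t t' hcard tr
    have hemp : (Finset.univ.filter fun i => t i ≠ t' i) = ∅ :=
      Finset.card_eq_zero.mp (Nat.le_zero.mp hcard)
    have ht : t = t' := by
      funext i
      by_contra h
      have hmem : i ∈ (Finset.univ.filter fun i => t i ≠ t' i) :=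
        Finset.mem_filter.mpr ⟨Finset.mem_univ i, h⟩
      rw [hemp] at hmem
      exact absurd hmem (Finset.notMem_empty i)
    simp [ht]
  | succ d ih =>
    intro t t' hcard tr
    by_cases ht : t = t'
    · subst ht
      have h1 : (1:ℝ) ≤ exp (ε * (d+1:ℕ)) := by
        rw [Real.one_le_exp_iff]
        exact mul_nonneg hε (by positivity)
      calc K t tr = 1 * K t tr := (one_mul _).symm
        _ ≤ exp (ε * (d+1:ℕ)) * K t tr :=
            mul_le_mul_of_nonneg_right h1 (hK0 t tr)
    · have hex : ∃ i, t i ≠ t' i := by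
        by_contra h
        push_neg at h
        exact ht (funext h)
      obtain ⟨i, hi⟩ := hex
      set t'' := Function.update t i (t' i) with ht''
      have hnb : NeighborStr t t'' := by
        refine ⟨i, ?_, ?_⟩
        · simp [ht'', Function.update_self]; exact hi
        · intro j hj; simp [ht'', Function.update_of_ne hj]
      have hsub : (Finset.univ.filter fun j => t'' j ≠ t' j) ⊆
          (Finset.univ.filter fun j => t j ≠ t' j) \ {i} := by
        intro j hj
        simp only [Finset.mem_filter, Finset.mem_univ, true_and] at hj
        have hji : j ≠ i := by
          intro h; subst h; apply hj; simp [ht'', Function.update_self]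
        simp only [Finset.mem_sdiff, Finset.mem_filter, Finset.mem_univ, true_and,
          Finset.mem_singleton]
        refine ⟨?_, hji⟩
        rwa [ht'', Function.update_of_ne hji] at hj
      have hmem : i ∈ (Finset.univ.filter fun j => t j ≠ t' j) := by simp [hi]
      have hcard' : (Finset.univ.filter fun j => t'' j ≠ t' j).card ≤ d := by
        calc _ ≤ ((Finset.univ.filter fun j => t j ≠ t' j) \ {i}).card :=
              Finset.card_le_card hsub
          _ = (Finset.univ.filter fun j => t j ≠ t' j).card - 1 := by
              rw [Finset.card_sdiff_of_subset (by simpa using hmem)]; simp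
          _ ≤ d := by omega
      have h1 := hDP t t'' hnb tr
      have h2 := ih t'' t' hcard' tr
      calc K t tr ≤ exp ε * K t'' tr := h1
        _ ≤ exp ε * (exp (ε * d) * K t' tr) :=
            mul_le_mul_of_nonneg_left h2 (le_of_lt (exp_pos ε))
        _ = exp (ε * (d+1:ℕ)) * K t' tr := by
            rw [← mul_assoc, ← Real.exp_add]; push_cast; ring_nf

/-- For an `ε`-differentially private two-party protocol on inputs in `Σ^{2n}` and
every input distribution `P`, the information cost satisfies
`I(T; Π(T)) ≤ 2εn` nats (hence at most `3εn` bits). -/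
theorem info_cost_le_of_dp {Sig 𝒯 : Type*} [Fintype Sig] [Fintype 𝒯]
    (n : ℕ) (K : (Fin (2 * n) → Sig) → 𝒯 → ℝ) (ε : ℝ) (hε : 0 ≤ ε)
    (hK0 : ∀ t tr, 0 ≤ K t tr) (hK1 : ∀ t, ∑ tr, K t tr = 1)
    (hDP : ∀ t t', NeighborStr t t' → ∀ tr, K t tr ≤ exp ε * K t' tr) :
    ∀ P : (Fin (2 * n) → Sig) → ℝ, (∀ t, 0 ≤ P t) → (∑ t, P t = 1) →
      infoCost P K ≤ 2 * ε * n := by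
  classical
  intro P hP0 hP1
  set c : ℝ := 2 * ε * n with hc
  have hc0 : 0 ≤ c := by positivity
  -- the global ratio bound
  have hratio : ∀ t t' tr, K t tr ≤ exp c * K t' tr := by
    intro t t' tr
    have hcard : (Finset.univ.filter fun i => t i ≠ t' i).card ≤ 2 * n := by
      calc _ ≤ (Finset.univ : Finset (Fin (2 * n))).card := Finset.card_le_card
            (Finset.filter_subset _ _)
        _ = 2 * n := by simp
    have := chain_bound K ε hε hK0 hDP (2 * n) t t' hcard tr
    convert this using 3
    push_cast [hc]; ring
  -- bound each summand
  have hterm : ∀ t tr,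
      P t * K t tr * log (K t tr / ∑ t', P t' * K t' tr) ≤ P t * K t tr * c := by
    intro t tr
    by_cases h : P t * K t tr = 0
    · rw [h]; simp
    · have hPK : 0 < P t * K t tr :=
        lt_of_le_of_ne (mul_nonneg (hP0 t) (hK0 t tr)) (Ne.symm h)
      have hM : 0 < ∑ t', P t' * K t' tr := by
        have hle : P t * K t tr ≤ ∑ t', P t' * K t' tr :=
          Finset.single_le_sum (fun t' _ => mul_nonneg (hP0 t') (hK0 t' tr))
            (Finset.mem_univ t)
        linarith
      have hK : K t tr ≤ exp c * ∑ t', P t' * K t' tr := by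
        calc K t tr = (∑ t', P t') * K t tr := by rw [hP1, one_mul]
          _ = ∑ t', P t' * K t tr := by rw [Finset.sum_mul]
          _ ≤ ∑ t', P t' * (exp c * K t' tr) :=
              Finset.sum_le_sum (fun t' _ =>
                mul_le_mul_of_nonneg_left (hratio t t' tr) (hP0 t'))
          _ = exp c * ∑ t', P t' * K t' tr := by
              rw [Finset.mul_sum]; apply Finset.sum_congr rfl; intros; ring
      have hK' : 0 < K t tr := by
        rcases (mul_pos_iff.mp hPK) with ⟨_, h⟩ | ⟨_, h⟩
        · exact h
        · linarith [hK0 t tr]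
      have hlog : log (K t tr / ∑ t', P t' * K t' tr) ≤ c := by
        rw [Real.log_le_iff_le_exp (div_pos hK' hM)]
        rw [div_le_iff₀ hM]
        exact hK
      exact mul_le_mul_of_nonneg_left hlog (le_of_lt hPK)
  calc infoCost P K ≤ ∑ t, ∑ tr, P t * K t tr * c := by
        apply Finset.sum_le_sum
        intro t _
        exact Finset.sum_le_sum (fun tr _ => hterm t tr)
    _ = ∑ t, P t * c := by
        apply Finset.sum_congr rfl
        intro t _
        rw [← Finset.sum_mul, ← Finset.mul_sum, hK1 t, mul_one]
    _ = c := by rw [← Finset.sum_mul, hP1, one_mul]
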